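/- arXiv:2104.04938 — 3 statements merged into one kernel-verified Lean document; each statement's English description precedes it below -/
import Mathlib

section
/- For any N×(N-2) complex matrix M and any four column vectors a, b, c, d in ℂ^N, the Plücker-type identity det(M,a,b)·det(M,c,d) − det(M,a,c)·det(M,b,d) + det(M,a,d)·det(M,b,c) = 0 holds, where (M,x,y) denotes the N×N matrix obtained by adjoining columns x and y to M. -/
open Matrix

set_option maxHeartbeats 1000000

/-- Adjoin two column vectors to an `(n+2) × n` matrix to get a square matrix. -/
noncomputable def adjoinTwo {n : ℕ} (M : Matrix (Fin (n + 2)) (Fin n) ℂ)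
    (a b : Fin (n + 2) → ℂ) : Matrix (Fin (n + 2)) (Fin (n + 2)) ℂ :=
  Matrix.of fun i j =>
    if h : (j : ℕ) < n then M i ⟨j, h⟩
    else if (j : ℕ) = n then a i else b i

lemma adjoin_linear {n : ℕ} (M : Matrix (Fin (n+2)) (Fin n) ℂ) (a : Fin (n+2) → ℂ) :
    ∃ w : Fin (n+2) → ℂ, ∀ x, (adjoinTwo M a x).det = ∑ i, w i * x i := by
  refine ⟨fun i => (-1)^((i:ℕ) + ((Fin.last (n+1) : Fin (n+2)):ℕ)) *
    ((adjoinTwo M a a).submatrix i.succAbove (Fin.last (n+1)).succAbove).det, fun x => ?_⟩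
  rw [Matrix.det_succ_column (adjoinTwo M a x) (Fin.last (n+1))]
  refine Finset.sum_congr rfl fun i _ => ?_
  have h1 : adjoinTwo M a x i (Fin.last (n+1)) = x i := by
    simp [adjoinTwo, Fin.last]
  have h2 : (adjoinTwo M a x).submatrix i.succAbove (Fin.last (n+1)).succAbove
      = (adjoinTwo M a a).submatrix i.succAbove (Fin.last (n+1)).succAbove := by
    funext i' j'
    simp only [Matrix.submatrix_apply, Fin.succAbove_last, adjoinTwo, Matrix.of_apply,
      Fin.coe_castSucc]
    split_ifs with h h'
    · rfl
    · rfl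
    · have := j'.isLt; omega
  rw [h1, h2]; ring

lemma val_succAbove' {m : ℕ} (p : Fin (m+1)) (i : Fin m) :
    ((p.succAbove i : Fin (m+1)) : ℕ) = if (i:ℕ) < (p:ℕ) then (i:ℕ) else (i:ℕ)+1 := by
  rcases Nat.lt_or_ge (i:ℕ) (p:ℕ) with h | h
  · rw [Fin.succAbove_of_castSucc_lt _ _ (by simpa [Fin.lt_def] using h), if_pos h,
      Fin.coe_castSucc]
  · rw [Fin.succAbove_of_le_castSucc _ _ (by simpa [Fin.le_def] using h),
      if_neg (by omega), Fin.val_succ]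

theorem plucker_identity {n : ℕ} (M : Matrix (Fin (n + 2)) (Fin n) ℂ)
    (a b c d : Fin (n + 2) → ℂ) :
    (adjoinTwo M a b).det * (adjoinTwo M c d).det
      - (adjoinTwo M a c).det * (adjoinTwo M b d).det
      + (adjoinTwo M a d).det * (adjoinTwo M b c).det = 0 := by
  classical
  obtain ⟨w, hw⟩ := adjoin_linear M a
  -- generic entry lemmas for adjoinTwo
  have hMcongr : ∀ (i : Fin (n+2)) (p q : ℕ) (hp : p < n) (hq : q < n), p = q →
      M i ⟨p, hp⟩ = M i ⟨q, hq⟩ := by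
    intro i p q hp hq h; subst h; rfl
  have hadjM : ∀ (x y : Fin (n+2) → ℂ) (i q : Fin (n+2)) (h : (q:ℕ) < n),
      adjoinTwo M x y i q = M i ⟨(q:ℕ), h⟩ := by
    intro x y i q h
    simp only [adjoinTwo, Matrix.of_apply]
    rw [dif_pos h]
  have hadjx : ∀ (x y : Fin (n+2) → ℂ) (i q : Fin (n+2)), (q:ℕ) = n →
      adjoinTwo M x y i q = x i := by
    intro x y i q h
    simp only [adjoinTwo, Matrix.of_apply]
    rw [dif_neg (by omega), if_pos h]
  have hadjy : ∀ (x y : Fin (n+2) → ℂ) (i q : Fin (n+2)), (q:ℕ) = n+1 →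
      adjoinTwo M x y i q = y i := by
    intro x y i q h
    simp only [adjoinTwo, Matrix.of_apply]
    rw [dif_neg (by omega), if_neg (by omega)]
  -- the columns b, M₀, ..., M_{n-1}, c, d and the auxiliary matrix A
  set v : Fin (n+3) → Fin (n+2) → ℂ := fun j i =>
    if (j:ℕ) = 0 then b i else adjoinTwo M c d i ⟨(j:ℕ)-1, by have := j.isLt; omega⟩ with hv
  set A : Matrix (Fin (n+3)) (Fin (n+3)) ℂ := Matrix.of fun i j =>
    if (i:ℕ) = 0 then (adjoinTwo M a (v j)).det else v j ⟨(i:ℕ)-1, by have := i.isLt; omega⟩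
    with hA
  have hA0 : ∀ j, A 0 j = (adjoinTwo M a (v j)).det := by
    intro j; simp [hA]
  have hAs : ∀ (i : Fin (n+2)) (j : Fin (n+3)), A i.succ j = v j i := by
    intro i j
    simp only [hA, Matrix.of_apply, Fin.val_succ, Nat.add_sub_cancel, Fin.eta,
      Nat.succ_ne_zero, if_false]
  -- entry lemmas for v
  have hvb : ∀ (j : Fin (n+3)), (j:ℕ) = 0 → ∀ i, v j i = b i := by
    intro j h i; simp only [hv]; rw [if_pos h]
  have hvM : ∀ (j : Fin (n+3)) (h : (j:ℕ)-1 < n), (j:ℕ) ≠ 0 → ∀ i,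
      v j i = M i ⟨(j:ℕ)-1, h⟩ := by
    intro j h hne i; simp only [hv]
    rw [if_neg hne, hadjM c d i _ (by simp only [Fin.val_mk]; omega)]
  have hvc : ∀ (j : Fin (n+3)), (j:ℕ) = n+1 → ∀ i, v j i = c i := by
    intro j h i; simp only [hv]
    rw [if_neg (by omega), hadjx c d i _ (by simp only [Fin.val_mk]; omega)]
  have hvd : ∀ (j : Fin (n+3)), (j:ℕ) = n+2 → ∀ i, v j i = d i := by
    intro j h i; simp only [hv]
    rw [if_neg (by omega), hadjy c d i _ (by simp only [Fin.val_mk]; omega)]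
  clear_value v A
  clear hv hA
  -- A is singular: its first row is a combination of the others
  have hdetA : A.det = 0 := by
    have hrow : A 0 = ∑ i : Fin (n+2), w i • A i.succ := by
      funext j
      rw [Finset.sum_apply, hA0, hw]
      exact Finset.sum_congr rfl fun i _ => by rw [Pi.smul_apply, hAs, smul_eq_mul]
    set cf : Fin (n+3) → ℂ := fun k =>
      if (k:ℕ) = 0 then 0 else w ⟨(k:ℕ)-1, by have := k.isLt; omega⟩ with hcf
    have hcf0 : cf 0 = 0 := by simp [hcf]
    have hs : (∑ k, cf k • A k) = A 0 := by
      rw [Fin.sum_univ_succ, hcf0, zero_smul, zero_add, hrow]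
      refine Finset.sum_congr rfl fun i _ => ?_
      have hcfs : cf i.succ = w i := by simp [hcf, Fin.val_succ]
      rw [hcfs]
    have h := Matrix.det_updateRow_sum A 0 cf
    rw [hs, Matrix.updateRow_eq_self, hcf0, zero_smul] at h
    exact h
  -- the special column indices
  set j2 : Fin (n+3) := ⟨n+1, by omega⟩ with hj2
  set j3 : Fin (n+3) := ⟨n+2, by omega⟩ with hj3
  have hj2v : (j2:ℕ) = n+1 := rfl
  have hj3v : (j3:ℕ) = n+2 := rfl
  clear_value j2 j3
  clear hj2 hj3
  -- row-0 entries vanish at the middle indices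
  have hzero : ∀ j : Fin (n+3), (j:ℕ) ≠ 0 → (j:ℕ) ≠ n+1 → (j:ℕ) ≠ n+2 → A 0 j = 0 := by
    intro j h1 h2 h3
    have hjlt := j.isLt
    have hjn : (j:ℕ) - 1 < n := by omega
    rw [hA0]
    have hvj : v j = fun i => M i ⟨(j:ℕ)-1, hjn⟩ := funext fun i => hvM j hjn h1 i
    rw [hvj]
    refine Matrix.det_zero_of_column_eq (i := (⟨(j:ℕ)-1, by omega⟩ : Fin (n+2)))
      (j := ⟨n+1, by omega⟩) (by simp only [ne_eq, Fin.mk.injEq]; omega) ?_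
    intro k
    rw [hadjM _ _ k _ (by simp only [Fin.val_mk]; omega),
      hadjy _ _ k _ (by simp only [Fin.val_mk])]
  -- the permutation reordering the columns (b, M, x) to (M, b, x)
  set sig : Equiv.Perm (Fin (n+2)) := (Fin.cycleRange ⟨n, by omega⟩)⁻¹ with hsig
  have hsig0 : ((sig 0 : Fin (n+2)) : ℕ) = n := by
    rw [hsig]
    have : (Fin.cycleRange (⟨n, by omega⟩ : Fin (n+2)))⁻¹ 0 = ⟨n, by omega⟩ :=
      Fin.cycleRange_symm_zero _
    rw [this]
  have hsigs : ∀ k' : Fin (n+1), ((sig k'.succ : Fin (n+2)) : ℕ)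
      = if (k':ℕ) < n then (k':ℕ) else (k':ℕ)+1 := by
    intro k'
    rw [hsig]
    have : (Fin.cycleRange (⟨n, by omega⟩ : Fin (n+2)))⁻¹ k'.succ
        = (⟨n, by omega⟩ : Fin (n+2)).succAbove k' := Fin.cycleRange_symm_succ _ _
    rw [this, val_succAbove']
  have hsign : ((Equiv.Perm.sign sig : ℤˣ) : ℂ) = (-1)^n := by
    rw [hsig, Equiv.Perm.sign_inv, Fin.sign_cycleRange]
    simp
  clear_value sig
  clear hsig
  -- the three minors
  have hm0 : A.submatrix Fin.succ (Fin.succAbove 0) = adjoinTwo M c d := by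
    funext i' k
    rw [Matrix.submatrix_apply, hAs, Fin.succAbove_zero]
    have hks : ((Fin.succ k : Fin (n+3)) : ℕ) = (k:ℕ)+1 := Fin.val_succ k
    have hkl := k.isLt
    rcases Nat.lt_or_ge (k:ℕ) n with h | h
    · rw [hvM _ (by omega) (by omega) i', hadjM c d i' _ h]
      exact hMcongr i' _ _ _ _ (by omega)
    · rcases Nat.lt_or_ge (k:ℕ) (n+1) with h' | h'
      · rw [hvc _ (by omega) i', hadjx c d i' _ (by omega)]
      · rw [hvd _ (by omega) i', hadjy c d i' _ (by omega)]
  have hm2 : A.submatrix Fin.succ j2.succAbove = (adjoinTwo M b d).submatrix id ⇑sig := by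
    funext i' k
    rw [Matrix.submatrix_apply, hAs, Matrix.submatrix_apply, id_eq]
    induction k using Fin.cases with
    | zero =>
      have h1 : ((j2.succAbove 0 : Fin (n+3)) : ℕ) = 0 := by
        rw [val_succAbove', if_pos (by rw [hj2v]; simp)]; simp
      rw [hvb _ h1 i', hadjx b d i' _ hsig0]
    | succ k' =>
      have hkl := k'.isLt
      rcases Nat.lt_or_ge (k':ℕ) n with h | h
      · have h1 : ((j2.succAbove k'.succ : Fin (n+3)) : ℕ) = (k':ℕ)+1 := by
          rw [val_succAbove', if_pos (by rw [hj2v, Fin.val_succ]; omega), Fin.val_succ]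
        have h2 : ((sig k'.succ : Fin (n+2)) : ℕ) = (k':ℕ) := by
          rw [hsigs k', if_pos h]
        rw [hvM _ (by omega) (by omega) i', hadjM b d i' _ (by omega)]
        exact hMcongr i' _ _ _ _ (by omega)
      · have h1 : ((j2.succAbove k'.succ : Fin (n+3)) : ℕ) = (k':ℕ)+2 := by
          rw [val_succAbove', if_neg (by rw [hj2v, Fin.val_succ]; omega), Fin.val_succ]
        have h2 : ((sig k'.succ : Fin (n+2)) : ℕ) = (k':ℕ)+1 := by
          rw [hsigs k', if_neg (by omega)]
        rw [hvd _ (by omega) i', hadjy b d i' _ (by omega)]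
  have hm3 : A.submatrix Fin.succ j3.succAbove = (adjoinTwo M b c).submatrix id ⇑sig := by
    funext i' k
    rw [Matrix.submatrix_apply, hAs, Matrix.submatrix_apply, id_eq]
    induction k using Fin.cases with
    | zero =>
      have h1 : ((j3.succAbove 0 : Fin (n+3)) : ℕ) = 0 := by
        rw [val_succAbove', if_pos (by rw [hj3v]; simp)]; simp
      rw [hvb _ h1 i', hadjx b c i' _ hsig0]
    | succ k' =>
      have hkl := k'.isLt
      have h1 : ((j3.succAbove k'.succ : Fin (n+3)) : ℕ) = (k':ℕ)+1 := by
        rw [val_succAbove', if_pos (by rw [hj3v, Fin.val_succ]; omega), Fin.val_succ]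
      rcases Nat.lt_or_ge (k':ℕ) n with h | h
      · have h2 : ((sig k'.succ : Fin (n+2)) : ℕ) = (k':ℕ) := by
          rw [hsigs k', if_pos h]
        rw [hvM _ (by omega) (by omega) i', hadjM b c i' _ (by omega)]
        exact hMcongr i' _ _ _ _ (by omega)
      · have h2 : ((sig k'.succ : Fin (n+2)) : ℕ) = (k':ℕ)+1 := by
          rw [hsigs k', if_neg (by omega)]
        rw [hvc _ (by omega) i', hadjy b c i' _ (by omega)]
  -- Laplace expansion reduced to the three surviving terms
  have hsum : A.det = (-1:ℂ)^(((0:Fin (n+3))):ℕ) * A 0 0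
        * (A.submatrix Fin.succ (Fin.succAbove 0)).det
      + ((-1)^((j2:ℕ)) * A 0 j2 * (A.submatrix Fin.succ j2.succAbove).det
      + ((-1)^((j3:ℕ)) * A 0 j3 * (A.submatrix Fin.succ j3.succAbove).det)) := by
    rw [Matrix.det_succ_row_zero]
    have h1 : ∑ j : Fin (n+3), (-1:ℂ)^(j:ℕ) * A 0 j * (A.submatrix Fin.succ j.succAbove).det
        = ∑ j ∈ ({0, j2, j3} : Finset (Fin (n+3))),
            (-1:ℂ)^(j:ℕ) * A 0 j * (A.submatrix Fin.succ j.succAbove).det :=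
      (Finset.sum_subset (Finset.subset_univ _) (fun x _ hx => by
        simp only [Finset.mem_insert, Finset.mem_singleton] at hx
        push_neg at hx
        obtain ⟨e0, e2, e3⟩ := hx
        rw [hzero x (fun h => e0 (Fin.ext h)) (fun h => e2 (Fin.ext (by rw [h, hj2v])))
          (fun h => e3 (Fin.ext (by rw [h, hj3v]))), mul_zero, zero_mul])).symm
    rw [h1, Finset.sum_insert (by simp [Fin.ext_iff, hj2v, hj3v]),
      Finset.sum_insert (by simp [Fin.ext_iff, hj2v, hj3v]), Finset.sum_singleton]
  have hv0f : v 0 = b := funext (hvb 0 (by simp))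
  have hv2f : v j2 = c := funext (hvc j2 hj2v)
  have hv3f : v j3 = d := funext (hvd j3 hj3v)
  have e0 : A 0 0 = (adjoinTwo M a b).det := by rw [hA0, hv0f]
  have e2 : A 0 j2 = (adjoinTwo M a c).det := by rw [hA0, hv2f]
  have e3 : A 0 j3 = (adjoinTwo M a d).det := by rw [hA0, hv3f]
  have hd2 : (A.submatrix Fin.succ j2.succAbove).det = (-1:ℂ)^n * (adjoinTwo M b d).det := by
    rw [hm2, Matrix.det_permute', hsign]
  have hd3 : (A.submatrix Fin.succ j3.succAbove).det = (-1:ℂ)^n * (adjoinTwo M b c).det := by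
    rw [hm3, Matrix.det_permute', hsign]
  rw [hdetA, e0, e2, e3, hm0, hd2, hd3, hj2v, hj3v, Fin.val_zero] at hsum
  have p1 : ((-1:ℂ))^(n+1) * (-1)^n = -1 := by
    rw [← pow_add]; exact Odd.neg_one_pow ⟨n, by ring⟩
  have p2 : ((-1:ℂ))^(n+2) * (-1)^n = 1 := by
    rw [← pow_add]; exact Even.neg_one_pow ⟨n+1, by ring⟩
  linear_combination -hsum - (adjoinTwo M a c).det * (adjoinTwo M b d).det * p1
    - (adjoinTwo M a d).det * (adjoinTwo M b c).det * p2
end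

section
/- The function u(x,t) = c d (k² − (k̄)²) / ( |k|² [ k̄ |d|² e^{−i(k²x + t/k²)} − k |c|² e^{−i((k̄)²x + t/(k̄)²)} ] ) satisfies the Fokas-Lenells equation u_{xt} + u − 2i|u|²u_x = 0 at every point where the denominator is nonzero, for any k ∈ ℂ with Re(k)·Im(k) ≠ 0 and any nonzero c, d ∈ ℂ. -/
open Complex

noncomputable def dX (f : ℝ → ℝ → ℂ) (x t : ℝ) : ℂ := deriv (fun x' => f x' t) x
noncomputable def dT (f : ℝ → ℝ → ℂ) (x t : ℝ) : ℂ := deriv (fun t' => f x t') t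

/-- The one-soliton solution of the Fokas-Lenells equation. -/
noncomputable def oneSoliton (k c d : ℂ) (x t : ℝ) : ℂ :=
  c * d * (k ^ 2 - (starRingEnd ℂ k) ^ 2) /
    (((Complex.normSq k : ℝ) : ℂ) *
      (starRingEnd ℂ k * ((Complex.normSq d : ℝ) : ℂ) *
          Complex.exp (-I * (k ^ 2 * (x : ℂ) + (t : ℂ) / k ^ 2))
        - k * ((Complex.normSq c : ℝ) : ℂ) *
          Complex.exp (-I * ((starRingEnd ℂ k) ^ 2 * (x : ℂ) + (t : ℂ) / (starRingEnd ℂ k) ^ 2))))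

/-!
Write `u = N / W` with `W = A e_l + B e_m`, where `e_l = exp (-i (l x + t / l))`, `l = k²`,
`m = k̄²`. Every `e_l` satisfies `∂ₓ∂ₜ e_l = -e_l`, so `W_xt = -W`, and the residual of the
Fokas-Lenells equation at `u` becomes `2N/W³ · (W² + W_x W_t + i |N|² W_x / W̄)`. The bilinear part
`W² + W_x W_t` reduces to the cross term `-AB (l - m)² / (l m) · e_l e_m`, and since `m = l̄` the
conjugate of `e_l` is `1 / e_m`. The bracket is therefore a linear combination of `e_l` and `e_m`,
whose two coefficients vanish by two algebraic relations between `A`, `B`, `N`, `l`, `m` that the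
amplitudes of the one-soliton satisfy.
-/

noncomputable def wave (l : ℂ) (x t : ℝ) : ℂ := exp (-I * (l * x + t / l))

noncomputable def waveSum (A B l m : ℂ) (x t : ℝ) : ℂ := A * wave l x t + B * wave m x t

section Waves

variable (A B l m : ℂ) (x t : ℝ)

theorem wave_ne_zero : wave l x t ≠ 0 := exp_ne_zero _

theorem hasDerivAt_wave_x : HasDerivAt (fun x => wave l x t) (-I * l * wave l x t) x := by
  have h : HasDerivAt (fun z : ℂ => -I * (l * z + t / l)) (-I * l) x := by
    simpa using (((hasDerivAt_id (x : ℂ)).const_mul l).add_const _).const_mul (-I)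
  unfold wave
  rw [mul_comm]
  exact h.cexp.comp_ofReal

theorem hasDerivAt_wave_t : HasDerivAt (fun t => wave l x t) (-I / l * wave l x t) t := by
  have h : HasDerivAt (fun z : ℂ => -I * (l * x + z / l)) (-I / l) t := by
    simpa [div_eq_mul_inv] using (((hasDerivAt_id (t : ℂ)).div_const l).const_add _).const_mul (-I)
  unfold wave
  rw [mul_comm (-I / l)]
  exact h.cexp.comp_ofReal

theorem conj_wave : starRingEnd ℂ (wave l x t) = (wave (starRingEnd ℂ l) x t)⁻¹ := by
  simp only [wave, ← exp_conj, ← exp_neg, map_neg, map_mul, map_add, map_div₀, conj_I, conj_ofReal]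
  ring_nf

theorem hasDerivAt_waveSum_x :
    HasDerivAt (fun x => waveSum A B l m x t) (-I * waveSum (A * l) (B * m) l m x t) x := by
  refine (((hasDerivAt_wave_x l x t).const_mul A).add
    ((hasDerivAt_wave_x m x t).const_mul B)).congr_deriv ?_
  simp only [waveSum]; ring

theorem hasDerivAt_waveSum_t :
    HasDerivAt (fun t => waveSum A B l m x t) (-I * waveSum (A / l) (B / m) l m x t) t := by
  refine (((hasDerivAt_wave_t l x t).const_mul A).add
    ((hasDerivAt_wave_t m x t).const_mul B)).congr_deriv ?_
  simp only [waveSum]; ring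

theorem hasDerivAt_waveSum_xt (hl : l ≠ 0) (hm : m ≠ 0) :
    HasDerivAt (fun t => -I * waveSum (A * l) (B * m) l m x t) (-waveSum A B l m x t) t := by
  refine ((hasDerivAt_waveSum_t (A * l) (B * m) l m x t).const_mul (-I)).congr_deriv ?_
  rw [mul_div_cancel_right₀ _ hl, mul_div_cancel_right₀ _ hm, ← mul_assoc]
  simp

theorem waveSum_sq_add_mul (hl : l ≠ 0) (hm : m ≠ 0) :
    waveSum A B l m x t ^ 2
        + (-I * waveSum (A * l) (B * m) l m x t) * (-I * waveSum (A / l) (B / m) l m x t)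
      = -(A * B * (l - m) ^ 2 / (l * m)) * (wave l x t * wave m x t) := by
  simp only [waveSum]
  field_simp
  ring_nf
  simp only [I_sq]
  ring

end Waves

noncomputable def flResidual (u : ℝ → ℝ → ℂ) (x t : ℝ) : ℂ :=
  dT (dX u) x t + u x t - 2 * I * (u x t * starRingEnd ℂ (u x t)) * dX u x t

section Quotient

variable {W Wx : ℝ → ℝ → ℂ} (N : ℂ) {x t : ℝ}

theorem dX_const_div (hx : HasDerivAt (fun x => W x t) (Wx x t) x) (h : W x t ≠ 0) :
    dX (fun x t => N / W x t) x t = -(N * Wx x t) / W x t ^ 2 := by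
  have hderiv : HasDerivAt (fun x => N / W x t) _ x := (hasDerivAt_const x N).div hx h
  rw [dX, hderiv.deriv]
  ring

theorem dT_dX_const_div {Wt Wxt : ℂ} (hx : ∀ t, HasDerivAt (fun x => W x t) (Wx x t) x)
    (ht : HasDerivAt (fun t => W x t) Wt t) (hxt : HasDerivAt (fun t => Wx x t) Wxt t)
    (h : W x t ≠ 0) :
    dT (dX fun x t => N / W x t) x t = -N * (Wxt * W x t - 2 * Wx x t * Wt) / W x t ^ 3 := by
  have hnear : (fun t => dX (fun x t => N / W x t) x t) =ᶠ[nhds t]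
      fun t => -(N * Wx x t) / W x t ^ 2 :=
    (ht.continuousAt.eventually_ne h).mono fun t ht => dX_const_div N (hx t) ht
  have hderiv : HasDerivAt (fun t => -(N * Wx x t) / W x t ^ 2) _ t :=
    (hxt.const_mul N).neg.div (ht.pow 2) (pow_ne_zero 2 h)
  rw [dT, hnear.deriv_eq, hderiv.deriv, Pi.neg_apply]
  field_simp
  ring

theorem flResidual_const_div {Wt : ℂ} (hx : ∀ t, HasDerivAt (fun x => W x t) (Wx x t) x)
    (ht : HasDerivAt (fun t => W x t) Wt t) (hxt : HasDerivAt (fun t => Wx x t) (-W x t) t)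
    (h : W x t ≠ 0) :
    flResidual (fun x t => N / W x t) x t = 2 * N / W x t ^ 3 *
      (W x t ^ 2 + Wx x t * Wt + I * (N * starRingEnd ℂ N) * Wx x t / starRingEnd ℂ (W x t)) := by
  have hconj : starRingEnd ℂ (W x t) ≠ 0 := (map_ne_zero _).mpr h
  rw [flResidual, dT_dX_const_div N hx ht hxt h, dX_const_div N (hx t) h, map_div₀]
  field_simp
  ring

end Quotient

section WaveSum

variable (A B l m N : ℂ) {x t : ℝ}

theorem conj_waveSum (hlm : starRingEnd ℂ l = m) :
    starRingEnd ℂ (waveSum A B l m x t) =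
      (starRingEnd ℂ A * wave l x t + starRingEnd ℂ B * wave m x t) /
        (wave l x t * wave m x t) := by
  have hml : starRingEnd ℂ m = l := by rw [← hlm, conj_conj]
  have := wave_ne_zero l x t
  have := wave_ne_zero m x t
  simp only [waveSum, map_add, map_mul, conj_wave, hlm, hml]
  field_simp

theorem flResidual_const_div_waveSum_eq_zero (hl : l ≠ 0) (hlm : starRingEnd ℂ l = m)
    (hA : A * B * (l - m) ^ 2 / (l * m) * starRingEnd ℂ A = N * starRingEnd ℂ N * (A * l))
    (hB : A * B * (l - m) ^ 2 / (l * m) * starRingEnd ℂ B = N * starRingEnd ℂ N * (B * m))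
    (h : waveSum A B l m x t ≠ 0) :
    flResidual (fun x t => N / waveSum A B l m x t) x t = 0 := by
  have hm : m ≠ 0 := hlm ▸ (map_ne_zero _).mpr hl
  have hconj := (map_ne_zero (starRingEnd ℂ)).mpr h
  rw [flResidual_const_div N (Wx := fun x t => -I * waveSum (A * l) (B * m) l m x t)
    (fun t => hasDerivAt_waveSum_x A B l m x t)
    (hasDerivAt_waveSum_t A B l m x t) (hasDerivAt_waveSum_xt A B l m x t hl hm) h,
    waveSum_sq_add_mul A B l m x t hl hm]
  rw [conj_waveSum A B l m hlm] at hconj ⊢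
  have hS := left_ne_zero_of_mul hconj
  have key : A * B * (l - m) ^ 2 / (l * m) *
      (starRingEnd ℂ A * wave l x t + starRingEnd ℂ B * wave m x t) =
      N * starRingEnd ℂ N * waveSum (A * l) (B * m) l m x t := by
    rw [waveSum]
    linear_combination wave l x t * hA + wave m x t * hB
  have hI : ∀ z : ℂ, I * z * (-I * waveSum (A * l) (B * m) l m x t) =
      z * waveSum (A * l) (B * m) l m x t := fun z => by ring_nf; rw [I_sq]; ring
  refine mul_eq_zero_of_right _ ?_
  rw [hI, ← key, mul_div_assoc (A * B * (l - m) ^ 2 / (l * m)), div_div_cancel₀ hS, neg_mul,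
    neg_add_cancel]

end WaveSum

section Soliton

variable (k c d : ℂ)

theorem oneSoliton_eq_const_div_waveSum :
    oneSoliton k c d = fun x t => c * d * (k ^ 2 - starRingEnd ℂ k ^ 2) /
      waveSum ((normSq k : ℂ) * starRingEnd ℂ k * (normSq d : ℂ)) (-((normSq k : ℂ) * k * normSq c))
        (k ^ 2) (starRingEnd ℂ k ^ 2) x t := by
  funext x t
  simp only [oneSoliton, waveSum, wave]
  ring_nf

theorem oneSoliton_amplitude_relations (hk : k ≠ 0) :
    let A := (normSq k : ℂ) * starRingEnd ℂ k * (normSq d : ℂ)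
    let B := -((normSq k : ℂ) * k * normSq c)
    let N := c * d * (k ^ 2 - starRingEnd ℂ k ^ 2)
    let P := A * B * (k ^ 2 - starRingEnd ℂ k ^ 2) ^ 2 / (k ^ 2 * starRingEnd ℂ k ^ 2)
    P * starRingEnd ℂ A = N * starRingEnd ℂ N * (A * k ^ 2) ∧
      P * starRingEnd ℂ B = N * starRingEnd ℂ N * (B * starRingEnd ℂ k ^ 2) := by
  have hk' : starRingEnd ℂ k ≠ 0 := (map_ne_zero _).mpr hk
  simp only [← mul_conj, map_mul, map_neg, map_sub, map_pow, conj_conj]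
  constructor <;> field_simp <;> ring

end Soliton

theorem oneSoliton_solves_FL_general (k c d : ℂ) :
    ∀ x t : ℝ,
      (((Complex.normSq k : ℝ) : ℂ) *
        (starRingEnd ℂ k * ((Complex.normSq d : ℝ) : ℂ) *
            Complex.exp (-I * (k ^ 2 * (x : ℂ) + (t : ℂ) / k ^ 2))
          - k * ((Complex.normSq c : ℝ) : ℂ) *
            Complex.exp (-I * ((starRingEnd ℂ k) ^ 2 * (x : ℂ) + (t : ℂ) / (starRingEnd ℂ k) ^ 2)))
        ≠ 0) →
      dT (dX (oneSoliton k c d)) x t + oneSoliton k c d x t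
        - 2 * I * (oneSoliton k c d x t * starRingEnd ℂ (oneSoliton k c d x t))
          * dX (oneSoliton k c d) x t = 0 := by
  intro x t hD
  have hk : k ≠ 0 := by rintro rfl; simp at hD
  obtain ⟨hA, hB⟩ := oneSoliton_amplitude_relations k c d hk
  change flResidual (oneSoliton k c d) x t = 0
  rw [oneSoliton_eq_const_div_waveSum]
  refine flResidual_const_div_waveSum_eq_zero _ _ _ _ _ (pow_ne_zero 2 hk) (map_pow _ _ _) hA hB ?_
  convert hD using 1
  simp only [waveSum, wave]
  ring_nf

theorem oneSoliton_solves_FL (k c d : ℂ) (hk : k.re * k.im ≠ 0) (hc : c ≠ 0) (hd : d ≠ 0) :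
    ∀ x t : ℝ,
      (((Complex.normSq k : ℝ) : ℂ) *
        (starRingEnd ℂ k * ((Complex.normSq d : ℝ) : ℂ) *
            Complex.exp (-I * (k ^ 2 * (x : ℂ) + (t : ℂ) / k ^ 2))
          - k * ((Complex.normSq c : ℝ) : ℂ) *
            Complex.exp (-I * ((starRingEnd ℂ k) ^ 2 * (x : ℂ) + (t : ℂ) / (starRingEnd ℂ k) ^ 2)))
        ≠ 0) →
      dT (dX (oneSoliton k c d)) x t + oneSoliton k c d x t
        - 2 * I * (oneSoliton k c d x t * starRingEnd ℂ (oneSoliton k c d x t))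
          * dX (oneSoliton k c d) x t = 0 :=
  oneSoliton_solves_FL_general k c d
end

section
/- For k = a + ib with a, b ∈ ℝ, ab ≠ 0, and c, d ∈ ℂ nonzero, the squared modulus of the one-soliton solution u(x,t) = c d (k² − (k̄)²)/( |k|² [ k̄ |d|² e^{−i(k²x + t/k²)} − k |c|² e^{−i((k̄)²x + t/(k̄)²)} ] ) equals 8a²b²/((a²+b²)³) · 1/( cosh(4abx − 4abt/(a²+b²)² + 2 ln(|d|/|c|)) − (a²−b²)/(a²+b²) ), wherever the denominator is nonzero. -/
open Complex ComplexConjugate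

lemma normSq_conj_mul_sub (k : ℂ) {s : ℝ} (hs : 0 < s) :
    normSq (conj k * s - k) = 2 * s * (normSq k * Real.cosh (Real.log s) - (k ^ 2).re) := by
  rw [normSq_sub, Real.cosh_log hs]
  have : conj k * s * conj k = s * conj (k ^ 2) := by simp only [map_pow]; ring
  rw [this, re_ofReal_mul, conj_re, normSq_mul, normSq_conj, normSq_ofReal]
  field_simp

lemma im_sq_mul_add_div_sq (k : ℂ) (x t : ℝ) :
    (k ^ 2 * x + t / k ^ 2).im = (k ^ 2).im * (x - t / normSq k ^ 2) := by
  simp only [add_im, mul_im, ofReal_im, mul_zero, ofReal_re, zero_add, div_im, zero_mul, map_pow,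
    zero_div, zero_sub]
  ring

lemma normSq_exp_neg_I_mul (w : ℂ) : normSq (exp (-I * w)) = Real.exp (2 * w.im) := by
  rw [normSq_eq_norm_sq, norm_exp]
  simp [← Real.exp_nat_mul]

lemma exp_neg_I_mul_conj (w : ℂ) : exp (-I * conj w) = (conj (exp (-I * w)))⁻¹ := by
  rw [← exp_conj, ← exp_neg]
  simp

lemma sq_sub_conj_sq (k : ℂ) : k ^ 2 - conj k ^ 2 = 2 * (k ^ 2).im * I := by
  rw [← map_pow, sub_conj]
  push_cast
  ring

lemma conj_mul_sub_mul_inv_conj (k z : ℂ) (p q : ℝ) (hz : z ≠ 0) (hp : p ≠ 0) :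
    conj k * q * z - k * p * (conj z)⁻¹
      = p * (conj k * (q / p * normSq z : ℝ) - k) / conj z := by
  have hz' : conj z ≠ 0 := (map_ne_zero _).mpr hz
  have hp' : (p : ℂ) ≠ 0 := ofReal_ne_zero.mpr hp
  push_cast
  rw [← mul_conj]
  field_simp

theorem normSq_oneSoliton (k : ℂ) {c d : ℂ} (hc : c ≠ 0) (hd : d ≠ 0) (x t : ℝ) :
    normSq (oneSoliton k c d x t)
      = 2 * (k ^ 2).im ^ 2 / normSq k ^ 3 *
        (1 / (Real.cosh (2 * (k ^ 2).im * (x - t / normSq k ^ 2) + 2 * Real.log (‖d‖ / ‖c‖))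
          - (k ^ 2).re / normSq k)) := by
  set φ : ℂ := k ^ 2 * x + t / k ^ 2
  set z := exp (-I * φ)
  have hP : 0 < normSq c := normSq_pos.mpr hc
  have hQ : 0 < normSq d := normSq_pos.mpr hd
  have hconj : conj k ^ 2 * x + t / conj k ^ 2 = conj φ := by simp [φ, map_pow]
  have hr : 0 < normSq z := normSq_pos.mpr (exp_ne_zero _)
  set s := normSq d / normSq c * normSq z
  have hs : 0 < s := mul_pos (div_pos hQ hP) hr
  have hlog :
      Real.log s = 2 * (k ^ 2).im * (x - t / normSq k ^ 2) + 2 * Real.log (‖d‖ / ‖c‖) := by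
    rw [Real.log_mul (div_pos hQ hP).ne' hr.ne', normSq_exp_neg_I_mul, Real.log_exp,
      im_sq_mul_add_div_sq, normSq_eq_norm_sq c, normSq_eq_norm_sq d, ← div_pow, Real.log_pow]
    push_cast
    ring
  rw [oneSoliton, hconj, exp_neg_I_mul_conj,
    conj_mul_sub_mul_inv_conj k z _ _ (exp_ne_zero _) hP.ne', normSq_div, normSq_mul, normSq_mul,
    normSq_mul, normSq_div, normSq_mul, normSq_conj, normSq_ofReal, normSq_ofReal,
    normSq_conj_mul_sub k hs, hlog, sq_sub_conj_sq]
  generalize Real.cosh _ = C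
  rcases eq_or_ne (normSq k) 0 with hk | hk
  · -- both sides are `0` through division by zero
    simp [hk]
  have hm : normSq (2 * ((k ^ 2).im : ℂ) * I) = 4 * (k ^ 2).im ^ 2 := by
    simp only [normSq_mul, normSq_ofNat, normSq_ofReal, normSq_I, mul_one]
    ring
  rw [hm, sub_div' hk, one_div_div]
  simp only [s]
  field_simp
  ring

theorem oneSoliton_envelope_general (a b : ℝ) (c d : ℂ) (hc : c ≠ 0) (hd : d ≠ 0) :
    ∀ x t : ℝ,
      (((Complex.normSq (a + b * I) : ℝ) : ℂ) *
        (starRingEnd ℂ (a + b * I) * ((Complex.normSq d : ℝ) : ℂ) *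
            Complex.exp (-I * ((a + b * I) ^ 2 * (x : ℂ) + (t : ℂ) / (a + b * I) ^ 2))
          - (a + b * I) * ((Complex.normSq c : ℝ) : ℂ) *
            Complex.exp (-I * ((starRingEnd ℂ (a + b * I)) ^ 2 * (x : ℂ)
              + (t : ℂ) / (starRingEnd ℂ (a + b * I)) ^ 2))) ≠ 0) →
      Complex.normSq (oneSoliton (a + b * I) c d x t)
        = 8 * a ^ 2 * b ^ 2 / (a ^ 2 + b ^ 2) ^ 3 *
          (1 / (Real.cosh (4 * a * b * x - 4 * a * b * t / (a ^ 2 + b ^ 2) ^ 2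
              + 2 * Real.log (‖d‖ / ‖c‖))
            - (a ^ 2 - b ^ 2) / (a ^ 2 + b ^ 2))) := by
  intro x t _
  have hS : normSq (a + b * I) = a ^ 2 + b ^ 2 := by
    simp only [normSq_apply, add_re, ofReal_re, mul_re, I_re, mul_zero, ofReal_im, I_im, mul_one,
      sub_self, add_zero, add_im, mul_im, zero_add]
    ring
  have hre : ((a + b * I) ^ 2).re = a ^ 2 - b ^ 2 := by simp [sq]
  have him : ((a + b * I) ^ 2).im = 2 * a * b := by
    simp only [sq, mul_im, add_re, ofReal_re, mul_re, I_re, mul_zero, ofReal_im, I_im, mul_one,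
      sub_self, add_zero, add_im, zero_add]
    ring
  rw [normSq_oneSoliton _ hc hd, hS, hre, him]
  ring_nf

theorem oneSoliton_envelope (a b : ℝ) (hab : a * b ≠ 0) (c d : ℂ) (hc : c ≠ 0) (hd : d ≠ 0) :
    ∀ x t : ℝ,
      (((Complex.normSq (a + b * I) : ℝ) : ℂ) *
        (starRingEnd ℂ (a + b * I) * ((Complex.normSq d : ℝ) : ℂ) *
            Complex.exp (-I * ((a + b * I) ^ 2 * (x : ℂ) + (t : ℂ) / (a + b * I) ^ 2))
          - (a + b * I) * ((Complex.normSq c : ℝ) : ℂ) *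
            Complex.exp (-I * ((starRingEnd ℂ (a + b * I)) ^ 2 * (x : ℂ)
              + (t : ℂ) / (starRingEnd ℂ (a + b * I)) ^ 2))) ≠ 0) →
      Complex.normSq (oneSoliton (a + b * I) c d x t)
        = 8 * a ^ 2 * b ^ 2 / (a ^ 2 + b ^ 2) ^ 3 *
          (1 / (Real.cosh (4 * a * b * x - 4 * a * b * t / (a ^ 2 + b ^ 2) ^ 2
              + 2 * Real.log (‖d‖ / ‖c‖))
            - (a ^ 2 - b ^ 2) / (a ^ 2 + b ^ 2))) :=
  oneSoliton_envelope_general a b c d hc hd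
end
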